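/- The state category of the net N′_n (the pipeline net with transition t₂ deleted) is isomorphic to the product category 𝕀 × C_{n-2}, where 𝕀 = {0 < 1} is the two-element chain and C_{n-2} is the state category of N_{n-2}; in particular the state category of N′_n is a poset with least and greatest elements. -/

import Mathlib

/-! Concrete pipeline Petri nets. States of a net with `m` places are `Fin m → Bool`. -/

/-- The "tail" pipeline net `N` with `m` places `p₁,…,p_m` (0-indexed `0,…,m-1`) and `m`
events `t₂,…,t_{m+1}` (0-indexed: event `j` is `t_{j+2}` with `pre = {p_{j+1}}`, i.e. place
`j`, and `post = {p_{j+2}}`, i.e. place `j+1`, when `j+1 < m`, and `post = ∅` for the last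
event).  `stepT m s e` is the partial firing of event `e` at state `s`. -/
def stepT (m : ℕ) (s : Fin m → Bool) (e : Fin m) : Option (Fin m → Bool) :=
  if s e = true then
    if h : (e : ℕ) + 1 < m then
      if s ⟨(e : ℕ) + 1, h⟩ = false then
        some (Function.update (Function.update s e false) ⟨(e : ℕ) + 1, h⟩ true)
      else none
    else some (Function.update s e false)
  else none

/-- Firing a word (list) of events, `s · (a :: l) = (s · a) · l`. -/
def stepsT (m : ℕ) : (Fin m → Bool) → List (Fin m) → Option (Fin m → Bool)
  | s, [] => some s
  | s, a :: l => (stepT m s a).bind fun s' => stepsT m s' l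

/-- Resources (`pre ∪ post`, as a set of 0-indexed places) of event `e` of the tail net. -/
def resT (m : ℕ) (e : Fin m) : Set ℕ :=
  {x | x = (e : ℕ) ∨ (x = (e : ℕ) + 1 ∧ (e : ℕ) + 1 < m)}

/-- Independence of events of the tail net: disjoint resources. -/
def indepT (m : ℕ) (a b : Fin m) : Prop :=
  ∀ x, ¬(x ∈ resT m a ∧ x ∈ resT m b)

/-- One swap of adjacent independent letters in a word. -/
inductive TraceStep {E : Type} (r : E → E → Prop) : List E → List E → Prop
  | swap (u v : List E) (a b : E) : r a b →
      TraceStep r (u ++ a :: b :: v) (u ++ b :: a :: v)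

/-- Trace equivalence: two words represent the same element of the trace monoid `M(E,I)`
iff they are related by the equivalence closure of adjacent swaps of independent letters. -/
def TraceEquiv {E : Type} (r : E → E → Prop) : List E → List E → Prop :=
  Relation.EqvGen (TraceStep r)

/-- The net `N′_n`: pipeline with transition `t₂` deleted.  States are `Fin (n-1) → Bool`
(places `p₁,…,p_{n-1}`, 0-indexed).  Events are `Option (Fin (n-2))`: `none` is `t₁`
(`pre = ∅`, `post = {p₁}`, with the contact condition `p₁ ∉ s`), and `some j` is `t_{j+3}`
(`pre = {p_{j+2}}`, `post = {p_{j+3}}` when `j+3 ≤ n-1`, and `post = ∅` for `t_n`). -/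
def stepN' (n : ℕ) (s : Fin (n - 1) → Bool) : Option (Fin (n - 2)) → Option (Fin (n - 1) → Bool)
  | none =>
      if hp : 0 < n - 1 then
        if s ⟨0, hp⟩ = false then some (Function.update s ⟨0, hp⟩ true) else none
      else none
  | some j =>
      if h1 : (j : ℕ) + 1 < n - 1 then
        if s ⟨(j : ℕ) + 1, h1⟩ = true then
          if h2 : (j : ℕ) + 2 < n - 1 then
            if s ⟨(j : ℕ) + 2, h2⟩ = false then
              some (Function.update (Function.update s ⟨(j : ℕ) + 1, h1⟩ false)
                ⟨(j : ℕ) + 2, h2⟩ true)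
            else none
          else some (Function.update s ⟨(j : ℕ) + 1, h1⟩ false)
        else none
      else none

def stepsN' (n : ℕ) : (Fin (n - 1) → Bool) → List (Option (Fin (n - 2))) →
    Option (Fin (n - 1) → Bool)
  | s, [] => some s
  | s, a :: l => (stepN' n s a).bind fun s' => stepsN' n s' l

/-- Resources (`pre ∪ post`) of the events of `N′_n`. -/
def resN' (n : ℕ) : Option (Fin (n - 2)) → Set ℕ
  | none => {0}
  | some j => {x | x = (j : ℕ) + 1 ∨ (x = (j : ℕ) + 2 ∧ (j : ℕ) + 2 < n - 1)}

def indepN' (n : ℕ) (a b : Option (Fin (n - 2))) : Prop :=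
  ∀ x, ¬(x ∈ resN' n a ∧ x ∈ resN' n b)

/-- Reachability (the morphism-existence relation of the state category) in `N′_n`. -/
def reachN' (n : ℕ) (x y : Fin (n - 1) → Bool) : Prop :=
  ∃ l, stepsN' n x l = some y

/-- Reachability in the tail net `N` with `m` places (for `C_{n-2}`: the net on places
`p₂,…,p_{n-1}` with events `t₃,…,t_n`, i.e. the tail net with `m = n-2`). -/
def reachT (m : ℕ) (x y : Fin m → Bool) : Prop :=
  ∃ l, stepsT m x l = some y


open Function Relation

/-!
Write `n = m + 2`. A state of `N′_n` is a pair: the marking of `p₁` and a state of the tail net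
`N_m` on `p₂,…,p_{n-1}`. The event `t₁` only fills `p₁`, and every other event acts on the second
component exactly as in `N_m`. Hence reachability is the product of `false ≤ true` with
reachability in `N_m`, and the extremal states are (empty, full) and (full, empty): in `N_m` every
state empties out by pushing its last token off the end, and the full state reaches every state by
letting holes enter at the end and travel left.

Uniqueness of traces holds in any deterministic net in which two distinct events enabled at the
same state are independent and can be fired in either order, and in which the number of
occurrences of each event along a run is determined by its endpoints. Here `t_{j+3}` is the only
event moving a token out of `p₂,…,p_{j+2}`, and `t₁` the only one touching `p₁`. A run from a state
to itself is then empty, which is antisymmetry, and the first event of one run can be moved to the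
front of any other run with the same endpoints by swapping it past independent events.
-/

section Traces

variable {E : Type} {r : E → E → Prop}

theorem TraceEquiv.cons (a : E) {l₁ l₂ : List E} (h : TraceEquiv r l₁ l₂) :
    TraceEquiv r (a :: l₁) (a :: l₂) := by
  induction h with
  | rel _ _ h =>
    cases h with
    | swap u v b c hbc => exact .rel _ _ (.swap (a :: u) v b c hbc)
  | refl => exact .refl _
  | symm _ _ _ ih => exact .symm _ _ ih
  | trans _ _ _ _ _ ih₁ ih₂ => exact .trans _ _ _ ih₁ ih₂

theorem TraceEquiv.swap {a b : E} (h : r a b) (l : List E) :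
    TraceEquiv r (a :: b :: l) (b :: a :: l) :=
  .rel _ _ (.swap [] l a b h)

end Traces

section Runs

variable {S E : Type}

def Step (f : S → E → Option S) (x y : S) : Prop := ∃ a, f x a = some y

def Counts [DecidableEq E] (f : S → E → Option S) (e : E) (g : S → ℤ) : Prop :=
  ∀ x a y, f x a = some y → g y + (if a = e then 1 else 0) = g x

def DiamondProperty (f : S → E → Option S) (r : E → E → Prop) : Prop :=
  ∀ ⦃x y₁ y₂ : S⦄ ⦃a b : E⦄, a ≠ b → f x a = some y₁ → f x b = some y₂ →
    r a b ∧ ∃ z, f y₁ b = some z ∧ f y₂ a = some z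

variable {f : S → E → Option S}

theorem exists_foldlM_eq_some_iff {x y : S} :
    (∃ l : List E, l.foldlM f x = some y) ↔ ReflTransGen (Step f) x y := by
  constructor
  · rintro ⟨l, hl⟩
    induction l generalizing x with
    | nil => cases hl; rfl
    | cons a l ih =>
      obtain ⟨x', hx', hl⟩ := Option.bind_eq_some_iff.1 hl
      exact .head ⟨a, hx'⟩ (ih hl)
  · intro h
    induction h using ReflTransGen.head_induction_on with
    | refl => exact ⟨[], rfl⟩
    | head hxy _ ih =>
      obtain ⟨a, ha⟩ := hxy
      obtain ⟨l, hl⟩ := ih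
      exact ⟨a :: l, by simp [ha, hl]⟩

variable [DecidableEq E]

theorem Counts.add_count {e : E} {g : S → ℤ} (hg : Counts f e g) {l : List E} {x y : S}
    (h : l.foldlM f x = some y) : g y + l.count e = g x := by
  induction l generalizing x with
  | nil => cases h; simp
  | cons a l ih =>
    obtain ⟨x', hx', hl⟩ := Option.bind_eq_some_iff.1 h
    have hstep := hg x a x' hx'
    have hrest := ih hl
    simp only [List.count_cons, beq_iff_eq]
    push_cast
    linarith

theorem count_eq_of_foldlM_eq_some (hc : ∀ e, ∃ g, Counts f e g) {l₁ l₂ : List E} {x y : S}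
    (h₁ : l₁.foldlM f x = some y) (h₂ : l₂.foldlM f x = some y) (e : E) :
    l₁.count e = l₂.count e := by
  obtain ⟨g, hg⟩ := hc e
  have := hg.add_count h₁
  have := hg.add_count h₂
  omega

theorem eq_nil_of_foldlM_eq_some_self (hc : ∀ e, ∃ g, Counts f e g) {l : List E} {x : S}
    (h : l.foldlM f x = some x) : l = [] := by
  cases l with
  | nil => rfl
  | cons a l => simpa using count_eq_of_foldlM_eq_some hc h (l₂ := []) rfl a

theorem eq_of_foldlM_eq_some_of_foldlM_eq_some (hc : ∀ e, ∃ g, Counts f e g)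
    {l₁ l₂ : List E} {x y : S} (h₁ : l₁.foldlM f x = some y) (h₂ : l₂.foldlM f y = some x) :
    x = y := by
  have hloop : (l₁ ++ l₂).foldlM f x = some x := by simp [List.foldlM_append, h₁, h₂]
  obtain rfl : l₁ = [] := (List.append_eq_nil_iff.1 (eq_nil_of_foldlM_eq_some_self hc hloop)).1
  simpa using h₁

variable {r : E → E → Prop}

theorem DiamondProperty.exists_traceEquiv_cons (hf : DiamondProperty f r) {b : E} {x y xb : S}
    (hb : f x b = some xb) {l : List E} (hl : l.foldlM f x = some y) (hmem : b ∈ l) :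
    ∃ l', l'.foldlM f xb = some y ∧ TraceEquiv r l (b :: l') := by
  induction l generalizing x xb with
  | nil => cases hmem
  | cons c l ih =>
    obtain ⟨xc, hc, hl⟩ := Option.bind_eq_some_iff.1 hl
    by_cases hcb : c = b
    · subst hcb
      obtain rfl : xb = xc := Option.some.inj (hb.symm.trans hc)
      exact ⟨l, hl, .refl _⟩
    · obtain ⟨hr, z, hz, hz'⟩ := hf hcb hc hb
      obtain ⟨l', hl', hequiv⟩ := ih hz hl (List.mem_of_ne_of_mem (Ne.symm hcb) hmem)
      exact ⟨c :: l', by simp [hz', hl'], .trans _ _ _ (hequiv.cons c) (TraceEquiv.swap hr l')⟩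

theorem DiamondProperty.traceEquiv (hf : DiamondProperty f r) (hc : ∀ e, ∃ g, Counts f e g)
    {x y : S} {l₁ l₂ : List E} (h₁ : l₁.foldlM f x = some y) (h₂ : l₂.foldlM f x = some y) :
    TraceEquiv r l₁ l₂ := by
  induction l₂ generalizing x l₁ with
  | nil =>
    cases h₂
    rw [eq_nil_of_foldlM_eq_some_self hc h₁]
    exact .refl _
  | cons b l₂ ih =>
    have hmem : b ∈ l₁ := List.count_pos_iff.1 <| by
      rw [count_eq_of_foldlM_eq_some hc h₁ h₂]
      simp
    obtain ⟨xb, hb, h₂⟩ := Option.bind_eq_some_iff.1 h₂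
    obtain ⟨l', hl', hequiv⟩ := hf.exists_traceEquiv_cons hb h₁ hmem
    exact .trans _ _ _ hequiv ((ih hl' h₂).cons b)

end Runs

section TailNet

variable {m : ℕ}

theorem stepsT_eq_foldlM (t : Fin m → Bool) (l : List (Fin m)) :
    stepsT m t l = l.foldlM (stepT m) t := by
  induction l generalizing t with
  | nil => rfl
  | cons a l ih => simp [stepsT, ih]

theorem reachT_iff {t t' : Fin m → Bool} : reachT m t t' ↔ ReflTransGen (Step (stepT m)) t t' := by
  simp only [reachT, stepsT_eq_foldlM, exists_foldlM_eq_some_iff]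

theorem stepT_eq_some_iff {t t' : Fin m → Bool} {k : Fin m} :
    stepT m t k = some t' ↔
      t k = true ∧ (∀ h : (k : ℕ) + 1 < m, t ⟨k + 1, h⟩ = false) ∧
        ∀ p : Fin m,
          t' p = if (p : ℕ) = k then false else if (p : ℕ) = k + 1 then true else t p := by
  have hfire : (∀ p : Fin m,
      t' p = if (p : ℕ) = k then false else if (p : ℕ) = k + 1 then true else t p) ↔
      t' = if h : (k : ℕ) + 1 < m then update (update t k false) ⟨k + 1, h⟩ true
        else update t k false := by
    rw [funext_iff]
    refine forall_congr' fun p => ?_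
    split_ifs <;> simp only [update_apply, Fin.ext_iff] <;> split_ifs <;> first | omega | simp_all
  rw [hfire]
  unfold stepT
  split_ifs <;> simp_all [@eq_comm _ t']

theorem stepT_of_lt {t : Fin m → Bool} {k : Fin m} (h : (k : ℕ) + 1 < m)
    (hk : t k = true) (hk' : t ⟨k + 1, h⟩ = false) :
    stepT m t k = some (update (update t k false) ⟨k + 1, h⟩ true) := by
  simp [stepT, hk, h, hk']

theorem stepT_of_not_lt {t : Fin m → Bool} {k : Fin m} (h : ¬(k : ℕ) + 1 < m)
    (hk : t k = true) : stepT m t k = some (update t k false) := by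
  simp [stepT, hk, h]

variable (m) in
theorem diamondProperty_stepT : DiamondProperty (stepT m) (indepT m) := by
  intro t tj tk j k hjk hj hk
  rw [stepT_eq_some_iff] at hj hk
  obtain ⟨hj₀, hj₁, htj⟩ := hj
  obtain ⟨hk₀, hk₁, htk⟩ := hk
  have hjk₀ : (j : ℕ) ≠ k := Fin.val_ne_of_ne hjk
  have hjk₁ : (j : ℕ) ≠ k + 1 := fun h => by
    simpa [show (⟨k + 1, h ▸ j.isLt⟩ : Fin m) = j from Fin.ext h.symm, hj₀] using hk₁ (h ▸ j.isLt)
  have hkj₁ : (k : ℕ) ≠ j + 1 := fun h => by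
    simpa [show (⟨j + 1, h ▸ k.isLt⟩ : Fin m) = k from Fin.ext h.symm, hk₀] using hj₁ (h ▸ k.isLt)
  refine ⟨fun x ⟨hxj, hxk⟩ => by simp only [resT, Set.mem_ofPred_eq] at hxj hxk; omega, ?_⟩
  refine ⟨fun p => if (p : ℕ) = j ∨ (p : ℕ) = k then false
    else if (p : ℕ) = j + 1 ∨ (p : ℕ) = k + 1 then true else t p, ?_, ?_⟩ <;>
  refine stepT_eq_some_iff.2 ⟨?_, fun h => ?_, fun p => ?_⟩ <;>
  simp only [htj, htk] <;> split_ifs <;> simp_all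

def weightedMarking (w : Fin m → ℤ) (t : Fin m → Bool) : ℤ :=
  ∑ p, if t p then w p else 0

theorem weightedMarking_update (w : Fin m → ℤ) (t : Fin m → Bool) (p : Fin m) (b : Bool) :
    weightedMarking w (update t p b) + (if t p then w p else 0) =
      weightedMarking w t + (if b then w p else 0) := by
  have h : (fun i => if update t p b i then w i else 0) =
      update (fun i => if t i then w i else 0) p (if b then w p else 0) := by
    ext i
    by_cases hi : i = p <;> simp [hi]
  simp only [weightedMarking, h, Finset.sum_update_of_mem (Finset.mem_univ p),
    Finset.sum_eq_add_sum_sdiff_singleton_of_mem (Finset.mem_univ p)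
      (fun i => if t i then w i else 0)]
  ring

theorem weightedMarking_of_stepT (w : Fin m → ℤ) {t t' : Fin m → Bool} {k : Fin m}
    (h : stepT m t k = some t') :
    weightedMarking w t' + w k =
      weightedMarking w t + if h : (k : ℕ) + 1 < m then w ⟨k + 1, h⟩ else 0 := by
  unfold stepT at h
  split_ifs at h with h₀ h₁ h₂ <;> cases h
  · have hne : (⟨k + 1, h₁⟩ : Fin m) ≠ k := by simp [Fin.ext_iff]
    have e₁ := weightedMarking_update w (update t k false) ⟨k + 1, h₁⟩ true
    have e₂ := weightedMarking_update w t k false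
    simp only [update_of_ne hne, h₂, Bool.false_eq_true, ↓reduceIte, add_zero, h₀] at e₁ e₂
    simp only [h₁, ↓reduceDIte]
    linarith
  · have e := weightedMarking_update w t k false
    simp only [h₀, ↓reduceIte, Bool.false_eq_true, add_zero] at e
    simp only [h₁, ↓reduceDIte, add_zero]
    linarith

/-- Event `j` is the only one that moves a token out of the places `≤ j`. -/
theorem counts_stepT (j : Fin m) :
    Counts (stepT m) j (weightedMarking fun p => if p ≤ j then 1 else 0) := by
  intro t k t' h
  have := weightedMarking_of_stepT (fun p => if p ≤ j then 1 else 0) h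
  simp only [Fin.le_iff_val_le_val, Fin.ext_iff] at this ⊢
  split_ifs at this ⊢ <;> omega

theorem reflTransGen_stepT_update_false_of_last_token {t : Fin m → Bool} {p : Fin m}
    (hp : t p = true) (hlast : ∀ i, p < i → t i = false) :
    ReflTransGen (Step (stepT m)) t (update t p false) := by
  obtain ⟨d, hd⟩ : ∃ d, m - p = d := ⟨_, rfl⟩
  induction d generalizing p t with
  | zero => omega
  | succ d ih =>
    by_cases h : (p : ℕ) + 1 < m
    · set q : Fin m := ⟨p + 1, h⟩
      have hpq : p < q := Fin.lt_def.2 (Nat.lt_succ_self _)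
      have hq : t q = false := hlast q hpq
      refine .head ⟨p, stepT_of_lt h hp hq⟩ ?_
      convert ih (p := q) (update_self ..) (fun i hi => ?_) (by simp only [q]; omega) using 1
      · rw [update_idem, eq_comm, update_eq_self_iff, update_of_ne hpq.ne', hq]
      · rw [update_of_ne hi.ne', update_of_ne (hpq.trans hi).ne']
        exact hlast i (hpq.trans hi)
    · exact .single ⟨p, stepT_of_not_lt h hp⟩

theorem reflTransGen_stepT_update_false_of_full {t : Fin m → Bool} {p : Fin m}
    (hfull : ∀ i, p ≤ i → t i = true) :
    ReflTransGen (Step (stepT m)) t (update t p false) := by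
  obtain ⟨d, hd⟩ : ∃ d, m - p = d := ⟨_, rfl⟩
  induction d generalizing p with
  | zero => omega
  | succ d ih =>
    by_cases h : (p : ℕ) + 1 < m
    · set q : Fin m := ⟨p + 1, h⟩
      have hpq : p < q := Fin.lt_def.2 (Nat.lt_succ_self _)
      refine (ih (p := q) (fun i hi => hfull i (hpq.le.trans hi)) (by simp only [q]; omega)).tail
        ⟨p, ?_⟩
      rw [stepT_of_lt h (by rw [update_of_ne hpq.ne]; exact hfull p le_rfl) (update_self ..),
        update_comm hpq.ne', update_idem, update_eq_self_iff.2]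
      rw [update_of_ne hpq.ne', hfull q hpq.le]
    · exact .single ⟨p, stepT_of_not_lt h (hfull p le_rfl)⟩

theorem forall_ge_eq_of_succ {t : Fin m → Bool} {b : Bool} {d : ℕ} (hd : d < m)
    (hb : t ⟨d, hd⟩ = b) (ht : ∀ i : Fin m, d + 1 ≤ i → t i = b) :
    ∀ i : Fin m, d ≤ i → t i = b := by
  intro i hi
  rcases Nat.eq_or_lt_of_le hi with h | h
  · rwa [show i = ⟨d, hd⟩ from Fin.ext h.symm]
  · exact ht i h

theorem reachT_allFalse (t : Fin m → Bool) : reachT m t fun _ => false := by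
  rw [reachT_iff]
  suffices h : ∀ d ≤ m, ∀ t : Fin m → Bool, (∀ i : Fin m, d ≤ i → t i = false) →
      ReflTransGen (Step (stepT m)) t fun _ => false from
    h m le_rfl t fun i hi => absurd i.isLt (by omega)
  intro d
  induction d with
  | zero =>
    intro _ t ht
    obtain rfl : t = fun _ => false := funext fun i => ht i (Nat.zero_le _)
    exact .refl
  | succ d ih =>
    intro hd t ht
    set p : Fin m := ⟨d, by omega⟩
    cases hp : t p
    · exact ih (by omega) t (forall_ge_eq_of_succ _ hp ht)
    · refine (reflTransGen_stepT_update_false_of_last_token hp ht).trans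
        (ih (by omega) _ (forall_ge_eq_of_succ _ (update_self ..) fun i hi => ?_))
      rw [update_of_ne (Fin.ne_of_gt hi)]
      exact ht i hi

theorem reachT_allTrue (t : Fin m → Bool) : reachT m (fun _ => true) t := by
  rw [reachT_iff]
  suffices h : ∀ d ≤ m, ∀ t : Fin m → Bool, (∀ i : Fin m, d ≤ i → t i = true) →
      ReflTransGen (Step (stepT m)) (fun _ => true) t from
    h m le_rfl t fun i hi => absurd i.isLt (by omega)
  intro d
  induction d with
  | zero =>
    intro _ t ht
    obtain rfl : t = fun _ => true := funext fun i => ht i (Nat.zero_le _)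
    exact .refl
  | succ d ih =>
    intro hd t ht
    set p : Fin m := ⟨d, by omega⟩
    cases hp : t p
    · have hfull : ∀ i, p ≤ i → update t p true i = true :=
        forall_ge_eq_of_succ _ (update_self ..) fun i hi => by
          rw [update_of_ne (Fin.ne_of_gt hi)]
          exact ht i hi
      convert (ih (by omega) _ hfull).trans (reflTransGen_stepT_update_false_of_full hfull)
      rw [update_idem, eq_comm, update_eq_self_iff, hp]
    · exact ih (by omega) t (forall_ge_eq_of_succ _ hp ht)

end TailNet

/- For `n = m + 2` the types `Fin (n - 1)` and `Fin (n - 2)` are definitionally `Fin (m + 1)` and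
`Fin m`, so a state of `N′_n` splits as `Fin.cons` of the marking of `p₁` and a state of the tail
net. The `(S := …)` and `(E := …)` annotations below fix this presentation of the types, which
the rewriting lemmas need syntactically. -/

section PipelineNet

variable {m : ℕ}

theorem stepsN'_eq_foldlM (n : ℕ) (x : Fin (n - 1) → Bool) (l : List (Option (Fin (n - 2)))) :
    stepsN' n x l = l.foldlM (stepN' n) x := by
  induction l generalizing x with
  | nil => rfl
  | cons a l ih => simp [stepsN', ih]

theorem reachN'_iff_reflTransGen {n : ℕ} {x y : Fin (n - 1) → Bool} :
    reachN' n x y ↔ ReflTransGen (Step (stepN' n)) x y := by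
  simp only [reachN', stepsN'_eq_foldlM, exists_foldlM_eq_some_iff]

theorem stepN'_cons_none (b : Bool) (t : Fin m → Bool) :
    stepN' (m + 2) (Fin.cons b t) none = if b then none else some (Fin.cons true t) := by
  have h : (⟨0, by omega⟩ : Fin (m + 1)) = 0 := rfl
  unfold stepN'
  simp only [h]
  cases b <;> simp [Fin.update_cons_zero]

theorem stepN'_cons_some (b : Bool) (t : Fin m → Bool) (j : Fin m) :
    stepN' (m + 2) (Fin.cons b t) (some j) = (stepT m t j).map (Fin.cons b) := by
  have h1 : (j : ℕ) + 1 < m + 2 - 1 := by omega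
  have hj : (⟨j + 1, h1⟩ : Fin (m + 1)) = j.succ := rfl
  by_cases h : (j : ℕ) + 1 < m
  · have h2 : (j : ℕ) + 2 < m + 2 - 1 := by omega
    have hj2 : (⟨j + 2, h2⟩ : Fin (m + 1)) = (⟨j + 1, h⟩ : Fin m).succ := rfl
    simp only [stepN', stepT, dif_pos h1, dif_pos h, dif_pos h2, hj, hj2, Fin.cons_succ]
    split_ifs <;> simp [Fin.cons_update]
  · have h2 : ¬(j : ℕ) + 2 < m + 2 - 1 := by omega
    simp only [stepN', stepT, dif_pos h1, dif_neg h, dif_neg h2, hj, Fin.cons_succ]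
    split_ifs <;> simp [Fin.cons_update]

theorem stepN'_none_eq_some_iff {x y : Fin (m + 1) → Bool} :
    stepN' (m + 2) x none = some y ↔ x 0 = false ∧ y 0 = true ∧ Fin.tail y = Fin.tail x := by
  induction x using Fin.consCases with | cons b t =>
  induction y using Fin.consCases with | cons c u =>
  cases b <;> simp [stepN'_cons_none, Fin.cons_inj, eq_comm]

theorem stepN'_some_eq_some_iff {x y : Fin (m + 1) → Bool} {k : Fin m} :
    stepN' (m + 2) x (some k) = some y ↔
      y 0 = x 0 ∧ stepT m (Fin.tail x) k = some (Fin.tail y) := by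
  induction x using Fin.consCases with | cons b t =>
  induction y using Fin.consCases with | cons c u =>
  simp [stepN'_cons_some, Fin.cons_inj, eq_comm, and_comm]

theorem indepN'_none_some (k : Fin m) : indepN' (m + 2) none (some k) := by
  rintro x ⟨hx, hk⟩
  simp only [resN', Set.mem_singleton_iff] at hx
  simp only [resN', Set.mem_ofPred_eq] at hk
  omega

theorem indepN'_some_some {j k : Fin m} (h : indepT m j k) :
    indepN' (m + 2) (some j) (some k) := by
  rintro x ⟨hj, hk⟩
  refine h (x - 1) ⟨?_, ?_⟩ <;> simp only [resN', resT, Set.mem_ofPred_eq] at hj hk ⊢ <;> omega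

variable (m) in
theorem diamondProperty_stepN' :
    DiamondProperty (S := Fin (m + 1) → Bool) (E := Option (Fin m)) (stepN' (m + 2))
      (indepN' (m + 2)) := by
  intro x y₁ y₂ a b hab h₁ h₂
  rcases a with _ | j <;> rcases b with _ | k
  · exact absurd rfl hab
  · obtain ⟨hx, hy₁, ht₁⟩ := stepN'_none_eq_some_iff.1 h₁
    obtain ⟨hy₂, ht₂⟩ := stepN'_some_eq_some_iff.1 h₂
    exact ⟨indepN'_none_some k, Fin.cons true (Fin.tail y₂),
      stepN'_some_eq_some_iff.2 ⟨hy₁.symm, by simpa [ht₁] using ht₂⟩,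
      stepN'_none_eq_some_iff.2 ⟨hy₂.trans hx, rfl, rfl⟩⟩
  · obtain ⟨hy₁, ht₁⟩ := stepN'_some_eq_some_iff.1 h₁
    obtain ⟨hx, hy₂, ht₂⟩ := stepN'_none_eq_some_iff.1 h₂
    exact ⟨fun p hp => indepN'_none_some j p hp.symm, Fin.cons true (Fin.tail y₁),
      stepN'_none_eq_some_iff.2 ⟨hy₁.trans hx, rfl, rfl⟩,
      stepN'_some_eq_some_iff.2 ⟨hy₂.symm, by simpa [ht₂] using ht₁⟩⟩
  · obtain ⟨hy₁, ht₁⟩ := stepN'_some_eq_some_iff.1 h₁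
    obtain ⟨hy₂, ht₂⟩ := stepN'_some_eq_some_iff.1 h₂
    obtain ⟨hr, z, hz₁, hz₂⟩ := diamondProperty_stepT m (fun h => hab (congrArg some h)) ht₁ ht₂
    exact ⟨indepN'_some_some hr, Fin.cons (x 0) z,
      stepN'_some_eq_some_iff.2 ⟨hy₁.symm, by simpa using hz₁⟩,
      stepN'_some_eq_some_iff.2 ⟨hy₂.symm, by simpa using hz₂⟩⟩

theorem counts_stepN' (e : Option (Fin m)) :
    ∃ g, Counts (S := Fin (m + 1) → Bool) (stepN' (m + 2)) e g := by
  rcases e with _ | j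
  · refine ⟨fun x => if x 0 then 0 else 1, fun x a y h => ?_⟩
    rcases a with _ | k
    · obtain ⟨hx, hy, -⟩ := stepN'_none_eq_some_iff.1 h
      simp [hx, hy]
    · simp [(stepN'_some_eq_some_iff.1 h).1]
  · refine ⟨fun x => weightedMarking (fun p => if p ≤ j then 1 else 0) (Fin.tail x),
      fun x a y h => ?_⟩
    rcases a with _ | k
    · simp [(stepN'_none_eq_some_iff.1 h).2.2]
    · simpa using counts_stepT j _ k _ (stepN'_some_eq_some_iff.1 h).2

theorem reachN'_iff {x y : Fin (m + 1) → Bool} :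
    reachN' (m + 2) x y ↔ x 0 ≤ y 0 ∧ reachT m (Fin.tail x) (Fin.tail y) := by
  rw [reachN'_iff_reflTransGen, reachT_iff]
  constructor
  · intro h
    induction h with
    | refl => exact ⟨le_rfl, .refl⟩
    | tail _ hstep ih =>
      obtain ⟨_ | k, h⟩ := hstep
      · obtain ⟨-, hy, ht⟩ := stepN'_none_eq_some_iff.1 h
        exact ⟨hy ▸ Bool.le_true _, ht ▸ ih.2⟩
      · obtain ⟨hy, ht⟩ := stepN'_some_eq_some_iff.1 h
        exact ⟨hy ▸ ih.1, ih.2.tail ⟨k, ht⟩⟩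
  · rintro ⟨h0, ht⟩
    induction x using Fin.consCases with | cons b t =>
    induction y using Fin.consCases with | cons c u =>
    simp only [Fin.cons_zero, Fin.tail_cons] at h0 ht
    have hlift : ReflTransGen (Step (stepN' (m + 2))) (Fin.cons b t : Fin (m + 1) → Bool)
        (Fin.cons b u) := by
      refine ReflTransGen.lift (p := Step (stepN' (m + 2)))
        (fun t => (Fin.cons b t : Fin (m + 1) → Bool)) ?_ _ _ ht
      rintro t t' ⟨k, hk⟩
      exact ⟨some k, by simp [stepN'_cons_some, hk]⟩
    cases b <;> cases c
    · exact hlift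
    · exact hlift.tail ⟨none, by simp [stepN'_cons_none]⟩
    · exact absurd h0 (by decide)
    · exact hlift

end PipelineNet

/-- The state category of `N′_n` is a poset (at most one trace between two states, and the
reachability preorder is antisymmetric) and is isomorphic, as a category (equivalently, as
an ordered set), to the product `𝕀 × C_{n-2}` of the two-element chain `𝕀 = {0 < 1}` (here
`Bool` with `false < true`) and the state category `C_{n-2}` of `N_{n-2}`; in particular it
has a least and a greatest element. -/
theorem stateCategoryN'_iso_product (n : ℕ) (hn : 3 ≤ n) :
    (∀ (x y : Fin (n - 1) → Bool) (l₁ l₂ : List (Option (Fin (n - 2)))),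
        stepsN' n x l₁ = some y → stepsN' n x l₂ = some y →
        TraceEquiv (indepN' n) l₁ l₂) ∧
    (∀ x y, reachN' n x y → reachN' n y x → x = y) ∧
    (∃ e : (Fin (n - 1) → Bool) ≃ Bool × (Fin (n - 2) → Bool),
        ∀ x y, reachN' n x y ↔ ((e x).1 ≤ (e y).1 ∧ reachT (n - 2) (e x).2 (e y).2)) ∧
    (∃ bot, ∀ x, reachN' n bot x) ∧ (∃ top, ∀ x, reachN' n x top) := by
  obtain ⟨m, rfl⟩ : ∃ m, n = m + 2 := ⟨n - 2, by omega⟩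
  refine ⟨fun x y l₁ l₂ h₁ h₂ => ?_, fun x y ⟨l₁, h₁⟩ ⟨l₂, h₂⟩ => ?_,
    ⟨(Fin.consEquiv fun _ => Bool).symm, fun x y => reachN'_iff⟩,
    ⟨Fin.cons false fun _ => true, fun x => reachN'_iff.2 ⟨Bool.false_le _, reachT_allTrue _⟩⟩,
    ⟨Fin.cons true fun _ => false, fun x => reachN'_iff.2 ⟨Bool.le_true _, reachT_allFalse _⟩⟩⟩
  · rw [stepsN'_eq_foldlM] at h₁ h₂
    exact (diamondProperty_stepN' m).traceEquiv counts_stepN' h₁ h₂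
  · rw [stepsN'_eq_foldlM] at h₁ h₂
    exact eq_of_foldlM_eq_some_of_foldlM_eq_some counts_stepN' h₁ h₂
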